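/- arXiv:1912.05187 — 3 statements merged into one kernel-verified Lean document; each statement's English description precedes it below -/
import Mathlib

section
/- Let (K, ρ, μ) be a compact metric measure space such that μ(B_r(x)) ≥ C r^Q for some constants C > 0, Q ≥ 0 and all x ∈ K, r > 0, and let p > Q/s with s ∈ (0,1). If u ∈ L^p(K, μ) and g ∈ L^p(K, μ) is a Hajłasz s-gradient of u (i.e., |u(x)-u(y)| ≤ ρ(x,y)^s (g(x)+g(y)) for μ-a.e. x, y), then u has a representative satisfying |u(x)-u(y)| ≤ C' ρ(x,y)^{s - Q/p} ‖g‖_{L^p} for all x, y ∈ K, where C' depends only on C, Q, p, s. -/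
/-!
By Chebyshev's inequality the set where `g` exceeds `λ(r) = (2/C)^{1/p} ‖g‖_p r^{-Q/p}` carries at
most half the mass `C r^Q` of any ball of radius `r`. Hence every ball contains points where
`g ≤ λ(r)` and which satisfy any prescribed almost-everywhere property; comparing two points of a
ball of radius `ρ` through such a third point bounds the difference of their `u`-values by
`const · ‖g‖_p ρ^(s - Q/p)`. Along the dyadic scales these bounds sum geometrically, so the values
of `u` at good points approaching `x` converge to some `v x`. Then `v = u` wherever the Hajłasz
inequality holds, and comparing the chains of `x` and `y` at the scale `dist x y` gives the Hölder
bound.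
-/

open Metric MeasureTheory NNReal ENNReal Filter Topology

theorem div_two_pow_rpow {R : ℝ} (hR : 0 ≤ R) (t : ℝ) (n : ℕ) :
    (R / 2 ^ n) ^ t = R ^ t * (2 ^ t)⁻¹ ^ n := by
  rw [Real.div_rpow hR (by positivity), ← Real.rpow_pow_comm zero_le_two, div_eq_mul_inv, inv_pow]

theorem inv_two_rpow_lt_one {t : ℝ} (ht : 0 < t) : (2 ^ t : ℝ)⁻¹ < 1 :=
  inv_lt_one_of_one_lt₀ (Real.one_lt_rpow one_lt_two ht)

theorem measure_lt_le_ofReal_of_rpow_le {α : Type*} [MeasurableSpace α] {μ : Measure α}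
    {g : α → ℝ} {p Λ a : ℝ} (hp : 0 < p)
    (hg : MemLp g (ENNReal.ofReal p) μ) (hΛ : 0 ≤ Λ)
    (h : (eLpNorm g (ENNReal.ofReal p) μ).toReal ^ p ≤ Λ ^ p * a) :
    μ {z | Λ < g z} ≤ ENNReal.ofReal a := by
  have hp0 : ENNReal.ofReal p ≠ 0 := by simpa using hp
  rcases eq_or_ne (eLpNorm g (ENNReal.ofReal p) μ) 0 with hN | hN
  · have hg0 : g =ᵐ[μ] 0 := (eLpNorm_eq_zero_iff hg.1 hp0).1 hN
    have hnull : μ {z | Λ < g z} = 0 :=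
      measure_mono_null (fun z hz => (hΛ.trans_lt hz).ne') (ae_iff.1 hg0)
    simp [hnull]
  have hNp : 0 < (eLpNorm g (ENNReal.ofReal p) μ).toReal ^ p :=
    Real.rpow_pos_of_pos (ENNReal.toReal_pos hN hg.eLpNorm_ne_top) p
  have hΛ0 : 0 < Λ := by
    refine hΛ.lt_of_ne fun hΛ0 => ?_
    rw [← hΛ0, Real.zero_rpow hp.ne', zero_mul] at h
    exact h.not_gt hNp
  have hcheb := mul_meas_ge_le_pow_eLpNorm' μ hp0 ENNReal.ofReal_ne_top hg.1 (ENNReal.ofReal Λ)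
  rw [ENNReal.toReal_ofReal hp.le, ENNReal.ofReal_rpow_of_nonneg hΛ hp.le,
    ← ENNReal.ofReal_toReal hg.eLpNorm_ne_top,
    ENNReal.ofReal_rpow_of_nonneg ENNReal.toReal_nonneg hp.le] at hcheb
  have hsub : {z | Λ < g z} ⊆ {z | ENNReal.ofReal Λ ≤ ‖g z‖ₑ} := fun z hz => by
    rw [Set.mem_ofPred_eq, ← ofReal_norm]
    exact ENNReal.ofReal_le_ofReal (hz.le.trans (Real.le_norm_self _))
  refine (measure_mono hsub).trans ((ENNReal.mul_le_mul_iff_right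
    (ENNReal.ofReal_pos.2 (Real.rpow_pos_of_pos hΛ0 p)).ne' ENNReal.ofReal_ne_top).1 ?_)
  rw [← ENNReal.ofReal_mul (Real.rpow_nonneg hΛ p)]
  exact hcheb.trans (ENNReal.ofReal_le_ofReal h)

theorem exists_mem_le_and_of_measure_lt {α : Type*} [MeasurableSpace α] {μ : Measure α}
    {g : α → ℝ} {S : Set α} {Λ : ℝ} {P : α → Prop} (h : μ {z | Λ < g z} < μ S)
    (hP : ∀ᵐ z ∂μ, P z) : ∃ z ∈ S, g z ≤ Λ ∧ P z := by
  by_contra! hS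
  have hcover : S ⊆ {z | Λ < g z} ∪ {z | ¬P z} := fun z hz => by
    by_cases hgz : g z ≤ Λ
    · exact Or.inr (hS z hz hgz)
    · exact Or.inl (not_le.1 hgz)
  refine ((measure_mono (μ := μ) hcover).trans (measure_union_le _ _)).not_gt ?_
  rwa [ae_iff.1 hP, add_zero]

section HajlaszGradient

variable {K : Type*} [MetricSpace K] [MeasurableSpace K] {μ : Measure K} {u g : K → ℝ}
  {s θ a : ℝ}

def hajlaszPoints (μ : Measure K) (u g : K → ℝ) (s : ℝ) : Set K :=
  {z | ∀ᵐ y ∂μ, |u z - u y| ≤ dist z y ^ s * (g z + g y)}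

def SuperlevelsLtBalls (μ : Measure K) (g : K → ℝ) (a θ : ℝ) : Prop :=
  ∀ (x : K) (r : ℝ), 0 < r → μ {z | a * r ^ (-θ) < g z} < μ (ball x r)

theorem SuperlevelsLtBalls.exists_near {P : K → Prop} (hlev : SuperlevelsLtBalls μ g a θ)
    (hP : ∀ᵐ z ∂μ, P z) (x : K) {r : ℝ} (hr : 0 < r) :
    ∃ z, dist z x < r ∧ g z ≤ a * r ^ (-θ) ∧ P z :=
  exists_mem_le_and_of_measure_lt (hlev x r hr) hP

theorem abs_sub_le_of_mem_hajlaszPoints (hs : 0 ≤ s) (hg0 : ∀ x, 0 ≤ g x)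
    (hlev : SuperlevelsLtBalls μ g a θ) {x z z' : K} {ρ : ℝ} (hρ : 0 < ρ)
    (hz : z ∈ hajlaszPoints μ u g s) (hz' : z' ∈ hajlaszPoints μ u g s)
    (hzx : dist z x < ρ) (hz'x : dist z' x < ρ) :
    |u z - u z'| ≤ (2 * ρ) ^ s * (g z + g z' + 2 * (a * ρ ^ (-θ))) := by
  obtain ⟨w, hwx, hgw, hzw, hz'w⟩ := hlev.exists_near (Filter.Eventually.and hz hz') x hρ
  have hclose : ∀ y, dist y x < ρ → dist y w ≤ 2 * ρ := fun y hyx => by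
    linarith [dist_triangle_right y w x]
  calc |u z - u z'| ≤ |u z - u w| + |u z' - u w| := by
        linarith [abs_sub_le (u z) (u w) (u z'), abs_sub_comm (u w) (u z')]
    _ ≤ dist z w ^ s * (g z + g w) + dist z' w ^ s * (g z' + g w) := add_le_add hzw hz'w
    _ ≤ (2 * ρ) ^ s * (g z + a * ρ ^ (-θ)) + (2 * ρ) ^ s * (g z' + a * ρ ^ (-θ)) := by
      gcongr
      · exact add_nonneg (hg0 z) (hg0 w)
      · exact hclose z hzx
      · exact add_nonneg (hg0 z') (hg0 w)
      · exact hclose z' hz'x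
    _ = (2 * ρ) ^ s * (g z + g z' + 2 * (a * ρ ^ (-θ))) := by ring

theorem abs_sub_le_rpow_of_mem_hajlaszPoints (hs : 0 ≤ s) (hθ : 0 ≤ θ) (ha : 0 ≤ a)
    (hg0 : ∀ x, 0 ≤ g x) (hlev : SuperlevelsLtBalls μ g a θ) {x z z' : K} {ρ r r' : ℝ}
    (hρ : 0 < ρ) (hz : z ∈ hajlaszPoints μ u g s) (hz' : z' ∈ hajlaszPoints μ u g s)
    (hzx : dist z x < ρ) (hz'x : dist z' x < ρ) (hr : ρ / 2 ≤ r) (hr' : ρ / 2 ≤ r')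
    (hgz : g z ≤ a * r ^ (-θ)) (hgz' : g z' ≤ a * r' ^ (-θ)) :
    |u z - u z'| ≤ 4 * 2 ^ s * 2 ^ θ * a * ρ ^ (s - θ) := by
  have hlevel_le : ∀ r, ρ / 2 ≤ r → a * r ^ (-θ) ≤ a * (ρ / 2) ^ (-θ) := fun r hr =>
    mul_le_mul_of_nonneg_left
      (Real.rpow_le_rpow_of_nonpos (half_pos hρ) hr (neg_nonpos.2 hθ)) ha
  calc |u z - u z'| ≤ (2 * ρ) ^ s * (g z + g z' + 2 * (a * ρ ^ (-θ))) :=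
        abs_sub_le_of_mem_hajlaszPoints hs hg0 hlev hρ hz hz' hzx hz'x
    _ ≤ (2 * ρ) ^ s * (4 * (a * (ρ / 2) ^ (-θ))) := by
      gcongr
      linarith [hlevel_le r hr, hlevel_le r' hr', hlevel_le ρ (half_le_self hρ.le)]
    _ = 4 * 2 ^ s * 2 ^ θ * a * ρ ^ (s - θ) := by
      rw [Real.mul_rpow zero_le_two hρ.le, Real.div_rpow hρ.le zero_le_two, Real.rpow_neg hρ.le,
        Real.rpow_neg zero_le_two, Real.rpow_sub hρ]
      field_simp

def IsLevelChain (μ : Measure K) (u g : K → ℝ) (s a θ R : ℝ) (x : K) (z : ℕ → K) : Prop :=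
  ∀ n, z n ∈ hajlaszPoints μ u g s ∧ dist (z n) x < R / 2 ^ n ∧
    g (z n) ≤ a * (R / 2 ^ n) ^ (-θ)

theorem SuperlevelsLtBalls.exists_isLevelChain (hlev : SuperlevelsLtBalls μ g a θ)
    (hH : ∀ᵐ z ∂μ, z ∈ hajlaszPoints μ u g s) {R : ℝ} (hR : 0 < R) (x : K) :
    ∃ z, IsLevelChain μ u g s a θ R x z := by
  choose z hzx hgz hz using fun n : ℕ => hlev.exists_near hH x (r := R / 2 ^ n) (by positivity)
  exact ⟨z, fun n => ⟨hz n, hzx n, hgz n⟩⟩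

namespace IsLevelChain

variable {R : ℝ} {x : K} {z : ℕ → K}

theorem dist_succ_le (hz : IsLevelChain μ u g s a θ R x z) (hθ : 0 ≤ θ) (hθs : θ ≤ s)
    (ha : 0 ≤ a) (hg0 : ∀ x, 0 ≤ g x) (hlev : SuperlevelsLtBalls μ g a θ) (hR : 0 < R) (n : ℕ) :
    dist (u (z n)) (u (z (n + 1))) ≤
      4 * 2 ^ s * 2 ^ θ * a * R ^ (s - θ) * (2 ^ (s - θ))⁻¹ ^ n := by
  have hhalf : R / 2 ^ (n + 1) = R / 2 ^ n / 2 := by rw [pow_succ, div_div]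
  obtain ⟨hz₀, hzx₀, hgz₀⟩ := hz n
  obtain ⟨hz₁, hzx₁, hgz₁⟩ := hz (n + 1)
  rw [Real.dist_eq, mul_assoc _ (R ^ _), ← div_two_pow_rpow hR.le]
  refine abs_sub_le_rpow_of_mem_hajlaszPoints (hθ.trans hθs) hθ ha hg0 hlev (by positivity) hz₀
    hz₁ hzx₀ (hzx₁.trans_le ?_) (half_le_self (by positivity)) hhalf.ge hgz₀ hgz₁
  rw [hhalf]
  exact half_le_self (by positivity)

theorem cauchySeq (hz : IsLevelChain μ u g s a θ R x z) (hθ : 0 ≤ θ) (hθs : θ < s)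
    (ha : 0 ≤ a) (hg0 : ∀ x, 0 ≤ g x) (hlev : SuperlevelsLtBalls μ g a θ) (hR : 0 < R) :
    CauchySeq (fun n => u (z n)) :=
  cauchySeq_of_le_geometric _ _ (inv_two_rpow_lt_one (sub_pos.2 hθs))
    (hz.dist_succ_le hθ hθs.le ha hg0 hlev hR)

theorem dist_le_of_tendsto (hz : IsLevelChain μ u g s a θ R x z) (hθ : 0 ≤ θ) (hθs : θ < s)
    (ha : 0 ≤ a) (hg0 : ∀ x, 0 ≤ g x) (hlev : SuperlevelsLtBalls μ g a θ) (hR : 0 < R) {v : ℝ}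
    (hv : Tendsto (fun n => u (z n)) atTop (𝓝 v)) (n : ℕ) :
    dist (u (z n)) v ≤
      4 * 2 ^ s * 2 ^ θ * a * (R / 2 ^ n) ^ (s - θ) / (1 - (2 ^ (s - θ))⁻¹) := by
  rw [div_two_pow_rpow hR.le, ← mul_assoc]
  exact dist_le_of_le_geometric_of_tendsto _ _ (inv_two_rpow_lt_one (sub_pos.2 hθs))
    (hz.dist_succ_le hθ hθs.le ha hg0 hlev hR) hv n

theorem tendsto_self (hz : IsLevelChain μ u g s a θ R x z) (hθ : 0 ≤ θ) (hθs : θ < s)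
    (hg0 : ∀ x, 0 ≤ g x) (hlev : SuperlevelsLtBalls μ g a θ) (hR : 0 < R)
    (hx : x ∈ hajlaszPoints μ u g s) :
    Tendsto (fun n => u (z n)) atTop (𝓝 (u x)) := by
  have hs : 0 < s := hθ.trans_lt hθs
  have hbound : ∀ n : ℕ, |u (z n) - u x| ≤
      2 ^ s * ((R / 2 ^ n) ^ s * g x + 3 * a * (R / 2 ^ n) ^ (s - θ)) := fun n => by
    obtain ⟨hzn, hznx, hgzn⟩ := hz n
    have hρ : 0 < R / 2 ^ n := by positivity
    calc |u (z n) - u x| = |u x - u (z n)| := abs_sub_comm _ _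
      _ ≤ (2 * (R / 2 ^ n)) ^ s * (g x + g (z n) + 2 * (a * (R / 2 ^ n) ^ (-θ))) :=
        abs_sub_le_of_mem_hajlaszPoints hs.le hg0 hlev hρ hx hzn (by simpa using hρ) hznx
      _ ≤ (2 * (R / 2 ^ n)) ^ s * (g x + 3 * (a * (R / 2 ^ n) ^ (-θ))) := by
        refine mul_le_mul_of_nonneg_left ?_ (by positivity)
        linarith
      _ = 2 ^ s * ((R / 2 ^ n) ^ s * g x + 3 * a * (R / 2 ^ n) ^ (s - θ)) := by
        rw [Real.mul_rpow zero_le_two hρ.le, Real.rpow_sub hρ, Real.rpow_neg hρ.le]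
        ring
  have hscale : Tendsto (fun n : ℕ => R / 2 ^ n) atTop (𝓝 0) :=
    tendsto_const_nhds.div_atTop (tendsto_pow_atTop_atTop_of_one_lt one_lt_two)
  have hcont : ContinuousAt (fun ρ : ℝ => 2 ^ s * (ρ ^ s * g x + 3 * a * ρ ^ (s - θ))) 0 := by
    fun_prop (disch := (right; linarith))
  have hlim := hcont.tendsto.comp hscale
  rw [Real.zero_rpow hs.ne', Real.zero_rpow (sub_pos.2 hθs).ne'] at hlim
  simp only [zero_mul, mul_zero, add_zero] at hlim
  exact tendsto_iff_norm_sub_tendsto_zero.2 (squeeze_zero (fun n => abs_nonneg _) hbound hlim)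

end IsLevelChain

/-- `4 * 2 ^ s * 2 ^ θ` is the oscillation constant at a single scale and
`1 / (1 - 2 ^ (θ - s))` the sum of the dyadic tail. -/
noncomputable def morreyConst (s θ : ℝ) : ℝ :=
  4 ^ (s - θ) * (2 / (1 - (2 ^ (s - θ))⁻¹) + 1) * (4 * 2 ^ s * 2 ^ θ)

theorem morreyConst_pos (hθs : θ < s) : 0 < morreyConst s θ := by
  have := sub_pos.2 (inv_two_rpow_lt_one (sub_pos.2 hθs))
  unfold morreyConst
  positivity

theorem abs_sub_le_of_isLevelChain (hθ : 0 ≤ θ) (hθs : θ < s) (ha : 0 ≤ a)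
    (hg0 : ∀ x, 0 ≤ g x) (hlev : SuperlevelsLtBalls μ g a θ) {R : ℝ} (hR : 0 < R)
    {x y : K} {zx zy : ℕ → K} {vx vy : ℝ} (hzx : IsLevelChain μ u g s a θ R x zx)
    (hzy : IsLevelChain μ u g s a θ R y zy) (hvx : Tendsto (fun n => u (zx n)) atTop (𝓝 vx))
    (hvy : Tendsto (fun n => u (zy n)) atTop (𝓝 vy)) (hxy : 0 < dist x y) (hxyR : dist x y ≤ R) :
    |vx - vy| ≤ morreyConst s θ * a * dist x y ^ (s - θ) := by
  set r := dist x y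
  obtain ⟨n, hn, hn'⟩ := exists_nat_pow_near ((one_le_div hxy).2 hxyR) one_lt_two
  have hρ : 0 < R / 2 ^ n := by positivity
  have hrρ : r ≤ R / 2 ^ n := by rwa [le_div_iff₀ (by positivity), mul_comm, ← le_div_iff₀ hxy]
  have hρr : R / 2 ^ n < 2 * r := by
    rw [div_lt_iff₀ hxy, pow_succ] at hn'
    rw [div_lt_iff₀ (by positivity)]
    linarith
  set ρ := R / 2 ^ n
  set t := s - θ with ht
  set q : ℝ := (2 ^ t)⁻¹ with hq
  set O : ℝ := 4 * 2 ^ s * 2 ^ θ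
  have h1q : 0 < 1 - q := sub_pos.2 (inv_two_rpow_lt_one (sub_pos.2 hθs))
  obtain ⟨hzxn, hzxnx, hgzxn⟩ := hzx n
  obtain ⟨hzyn, hzyny, hgzyn⟩ := hzy n
  have hzynx : dist (zy n) x < 2 * ρ := by
    linarith [dist_triangle (zy n) y x, dist_comm x y]
  have hmid : dist (u (zx n)) (u (zy n)) ≤ O * a * (2 * ρ) ^ t :=
    abs_sub_le_rpow_of_mem_hajlaszPoints (hθ.trans hθs.le) hθ ha hg0 hlev (by positivity) hzxn hzyn
      (by linarith) hzynx (by linarith) (by linarith) hgzxn hgzyn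
  have hρ2ρ : ρ ^ t ≤ (2 * ρ) ^ t := Real.rpow_le_rpow hρ.le (by linarith) (sub_pos.2 hθs).le
  have htx : dist (u (zx n)) vx ≤ O * a * (2 * ρ) ^ t / (1 - q) :=
    (hzx.dist_le_of_tendsto hθ hθs ha hg0 hlev hR hvx n).trans (by gcongr)
  have hty : dist (u (zy n)) vy ≤ O * a * (2 * ρ) ^ t / (1 - q) :=
    (hzy.dist_le_of_tendsto hθ hθs ha hg0 hlev hR hvy n).trans (by gcongr)
  calc |vx - vy| ≤ dist (u (zx n)) vx + dist (u (zx n)) (u (zy n)) + dist (u (zy n)) vy := by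
        rw [← Real.dist_eq]
        linarith [dist_triangle4 vx (u (zx n)) (u (zy n)) vy, dist_comm vx (u (zx n))]
    _ ≤ (2 / (1 - q) + 1) * O * a * (2 * ρ) ^ t := by
      have hsplit : (2 / (1 - q) + 1) * O * a * (2 * ρ) ^ t =
          2 * (O * a * (2 * ρ) ^ t / (1 - q)) + O * a * (2 * ρ) ^ t := by
        field_simp
      linarith
    _ ≤ (2 / (1 - q) + 1) * O * a * (4 * r) ^ t := by
      gcongr (2 / (1 - q) + 1) * O * a * ?_
      exact Real.rpow_le_rpow (by positivity) (by linarith) (sub_pos.2 hθs).le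
    _ = morreyConst s θ * a * r ^ t := by
      rw [Real.mul_rpow (by norm_num) hxy.le, morreyConst, ← ht, ← hq]
      ring

end HajlaszGradient

theorem exists_ae_eq_holder_of_superlevelsLtBalls {K : Type*} [MetricSpace K] [BoundedSpace K]
    [MeasurableSpace K] {μ : Measure K} {u g : K → ℝ} {s θ a : ℝ} (hθ : 0 ≤ θ) (hθs : θ < s)
    (ha : 0 ≤ a) (hg0 : ∀ x, 0 ≤ g x) (hH : ∀ᵐ x ∂μ, x ∈ hajlaszPoints μ u g s)
    (hlev : SuperlevelsLtBalls μ g a θ) :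
    ∃ v : K → ℝ, u =ᵐ[μ] v ∧ ∀ x y, |v x - v y| ≤ morreyConst s θ * a * dist x y ^ (s - θ) := by
  obtain ⟨R, hR⟩ := isBounded_iff.1 (Bornology.isBounded_univ.2 ‹BoundedSpace K›)
  have hR1 : 0 < max R 1 := lt_max_of_lt_right one_pos
  choose z hz using hlev.exists_isLevelChain hH hR1
  choose v hv using fun x =>
    cauchySeq_tendsto_of_complete ((hz x).cauchySeq hθ hθs ha hg0 hlev hR1)
  refine ⟨v, ?_, fun x y => ?_⟩
  · filter_upwards [hH] with x hx
    exact tendsto_nhds_unique ((hz x).tendsto_self hθ hθs hg0 hlev hR1 hx) (hv x)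
  rcases eq_or_ne x y with rfl | hxy
  · simp [Real.zero_rpow (sub_pos.2 hθs).ne']
  exact abs_sub_le_of_isLevelChain hθ hθs ha hg0 hlev hR1 (hz x) (hz y) (hv x) (hv y)
    (dist_pos.2 hxy) ((hR trivial trivial).trans (le_max_left R 1))

theorem superlevelsLtBalls_of_le_measure_ball {K : Type*} [MetricSpace K] [MeasurableSpace K]
    {μ : Measure K} {g : K → ℝ} {C Q p : ℝ} (hC : 0 < C) (hp : 0 < p)
    (hg : MemLp g (ENNReal.ofReal p) μ)
    (hlow : ∀ (x : K) (r : ℝ), 0 < r → ENNReal.ofReal (C * r ^ Q) ≤ μ (ball x r)) :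
    SuperlevelsLtBalls μ g ((2 / C) ^ (1 / p) * (eLpNorm g (ENNReal.ofReal p) μ).toReal)
      (Q / p) := by
  intro x r hr
  set N := (eLpNorm g (ENNReal.ofReal p) μ).toReal
  have hlevel_pow : ((2 / C) ^ (1 / p) * N * r ^ (-(Q / p))) ^ p * (C * r ^ Q / 2) = N ^ p := by
    have hC' : ((2 / C) ^ (1 / p)) ^ p = 2 / C := by
      rw [one_div, Real.rpow_inv_rpow (by positivity) hp.ne']
    have hr' : (r ^ (-(Q / p))) ^ p = (r ^ Q)⁻¹ := by
      rw [← Real.rpow_mul hr.le, neg_mul, div_mul_cancel₀ Q hp.ne', Real.rpow_neg hr.le]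
    have hrQ : 0 < r ^ Q := by positivity
    rw [Real.mul_rpow (by positivity) (by positivity), Real.mul_rpow (by positivity)
      ENNReal.toReal_nonneg, hC', hr']
    field_simp
    rfl
  calc μ {z | (2 / C) ^ (1 / p) * N * r ^ (-(Q / p)) < g z} ≤ ENNReal.ofReal (C * r ^ Q / 2) :=
        measure_lt_le_ofReal_of_rpow_le hp hg (by positivity) hlevel_pow.ge
    _ < ENNReal.ofReal (C * r ^ Q) :=
        (ENNReal.ofReal_lt_ofReal_iff (by positivity)).2 (half_lt_self (by positivity))
    _ ≤ μ (ball x r) := hlow x r hr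

theorem hajlasz_morrey_general {K : Type*} [MetricSpace K] [CompactSpace K]
    [MeasurableSpace K] (μ : Measure K)
    (C Q s p : ℝ) (hC : 0 < C) (hQ : 0 ≤ Q) (hs : 0 < s)
    (hp : Q / s < p)
    (hlow : ∀ (x : K) (r : ℝ), 0 < r → ENNReal.ofReal (C * r ^ Q) ≤ μ (ball x r)) :
    ∃ C' > (0 : ℝ), ∀ u g : K → ℝ,
      MemLp u (ENNReal.ofReal p) μ →
      MemLp g (ENNReal.ofReal p) μ →
      (∀ x, 0 ≤ g x) →
      (∀ᵐ x ∂μ, ∀ᵐ y ∂μ, |u x - u y| ≤ dist x y ^ s * (g x + g y)) →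
      ∃ v : K → ℝ, u =ᵐ[μ] v ∧ ∀ x y : K,
        |v x - v y| ≤ C' * dist x y ^ (s - Q / p) *
          (eLpNorm g (ENNReal.ofReal p) μ).toReal := by
  have hp0 : 0 < p := (div_nonneg hQ hs.le).trans_lt hp
  have hQps : Q / p < s := by
    rw [div_lt_iff₀ hp0]
    rwa [div_lt_iff₀ hs, mul_comm] at hp
  refine ⟨morreyConst s (Q / p) * (2 / C) ^ (1 / p),
    mul_pos (morreyConst_pos hQps) (by positivity), fun u g _ hg hg0 hH => ?_⟩
  obtain ⟨v, huv, hv⟩ := exists_ae_eq_holder_of_superlevelsLtBalls (div_nonneg hQ hp0.le) hQps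
    (by positivity) hg0 hH (superlevelsLtBalls_of_le_measure_ball hC hp0 hg hlow)
  exact ⟨v, huv, fun x y => (hv x y).trans_eq (by ring)⟩

/-- Morrey-type estimate: on a metric measure space with lower mass bound
`μ(B_r(x)) ≥ C r^Q` and `p > Q/s`, any `u ∈ L^p` with Hajłasz `s`-gradient
`g ∈ L^p` has a representative which is `(s - Q/p)`-Hölder with constant
`C' ‖g‖_{L^p}`, where `C'` depends only on `C, Q, p, s`. -/
theorem hajlasz_morrey {K : Type*} [MetricSpace K] [CompactSpace K]
    [MeasurableSpace K] [BorelSpace K] (μ : Measure K)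
    (C Q s p : ℝ) (hC : 0 < C) (hQ : 0 ≤ Q) (hs : 0 < s) (hs1 : s < 1)
    (hp1 : 1 ≤ p) (hp : Q / s < p)
    (hlow : ∀ (x : K) (r : ℝ), 0 < r → ENNReal.ofReal (C * r ^ Q) ≤ μ (ball x r)) :
    ∃ C' > (0 : ℝ), ∀ u g : K → ℝ,
      MemLp u (ENNReal.ofReal p) μ →
      MemLp g (ENNReal.ofReal p) μ →
      (∀ x, 0 ≤ g x) →
      (∀ᵐ x ∂μ, ∀ᵐ y ∂μ, |u x - u y| ≤ dist x y ^ s * (g x + g y)) →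
      ∃ v : K → ℝ, u =ᵐ[μ] v ∧ ∀ x y : K,
        |v x - v y| ≤ C' * dist x y ^ (s - Q / p) *
          (eLpNorm g (ENNReal.ofReal p) μ).toReal :=
  hajlasz_morrey_general μ C Q s p hC hQ hs hp hlow
end

section
/- Let (K, ρ) be a compact metric space satisfying Assumption H: for any f ∈ Lip(K,ρ), any finite subset A ⊆ K, and any constant C > 1, there exists g ∈ lip(K,ρ) with g = f on A and ‖g‖₁ ≤ C‖f‖₁. Then for every f ∈ Lip(K,ρ) there exists a sequence {f_n} ⊆ lip(K,ρ) such that f_n → f pointwise on K and sup_n ‖f_n‖₁ ≤ ‖f‖₁. -/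
open Metric Filter Topology

variable {K : Type*} [MetricSpace K]

/-- `f` belongs to the Lipschitz space `Lip(K,ρ)`. -/
def MemLip (f : K → ℝ) : Prop :=
  ∃ L : ℝ, ∀ x y : K, |f x - f y| ≤ L * dist x y

/-- `f` belongs to the little Lipschitz space `lip(K,ρ)`. -/
def MemLittleLip (f : K → ℝ) : Prop :=
  MemLip f ∧ ∀ ε > (0 : ℝ), ∃ δ > (0 : ℝ), ∀ x y : K,
    0 < dist x y → dist x y < δ → |f x - f y| < ε * dist x y

/-- The norm `‖f‖₁ = max{[f]₁, ‖f‖_∞}` on `Lip(K,ρ)`. -/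
noncomputable def lipNorm (f : K → ℝ) : ℝ :=
  max (sSup {r : ℝ | ∃ x y : K, x ≠ y ∧ r = |f x - f y| / dist x y})
    (sSup (Set.range fun x : K => |f x|))

lemma lipNorm_nonneg' (f : K → ℝ) : 0 ≤ lipNorm f := by
  refine le_trans (Real.sSup_nonneg ?_) (le_max_left _ _)
  rintro r ⟨x, y, hxy, rfl⟩
  positivity

lemma abs_sub_le_lipNorm' (f : K → ℝ) (hf : MemLip f) (x y : K) :
    |f x - f y| ≤ lipNorm f * dist x y := by
  obtain ⟨L, hL⟩ := hf
  rcases eq_or_ne x y with rfl | hxy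
  · simp
  · have hd : 0 < dist x y := dist_pos.2 hxy
    have hbdd : BddAbove {r : ℝ | ∃ x y : K, x ≠ y ∧ r = |f x - f y| / dist x y} := by
      refine ⟨max L 0, ?_⟩
      rintro r ⟨a, b, hab, rfl⟩
      have hd' : 0 < dist a b := dist_pos.2 hab
      rw [div_le_iff₀ hd']
      exact le_trans (hL a b) (mul_le_mul_of_nonneg_right (le_max_left _ _) hd'.le)
    have hmem : |f x - f y| / dist x y ∈
        {r : ℝ | ∃ x y : K, x ≠ y ∧ r = |f x - f y| / dist x y} := ⟨x, y, hxy, rfl⟩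
    have h1 : |f x - f y| / dist x y ≤ lipNorm f :=
      le_trans (le_csSup hbdd hmem) (le_max_left _ _)
    calc |f x - f y| = |f x - f y| / dist x y * dist x y := by field_simp
    _ ≤ lipNorm f * dist x y := mul_le_mul_of_nonneg_right h1 hd.le

lemma abs_le_lipNorm' [CompactSpace K] (f : K → ℝ) (hf : MemLip f) (x : K) :
    |f x| ≤ lipNorm f := by
  obtain ⟨L, hL⟩ := hf
  have hcont : Continuous f := by
    have : LipschitzWith ⟨max L 0, le_max_right _ _⟩ f := by
      refine LipschitzWith.of_dist_le_mul fun a b => ?_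
      rw [Real.dist_eq]
      exact le_trans (hL a b)
        (mul_le_mul_of_nonneg_right (le_max_left _ _) dist_nonneg)
    exact this.continuous
  have hbdd : BddAbove (Set.range fun x : K => |f x|) :=
    (isCompact_range hcont.abs).bddAbove
  exact le_trans (le_csSup hbdd ⟨x, rfl⟩) (le_max_right _ _)

lemma lipNorm_smul_le' [CompactSpace K] (f : K → ℝ) (hf : MemLip f) {c : ℝ} (hc : 0 ≤ c) :
    lipNorm (fun x => c * f x) ≤ c * lipNorm f := by
  have hb : 0 ≤ c * lipNorm f := mul_nonneg hc (lipNorm_nonneg' f)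
  refine max_le (Real.sSup_le ?_ hb) (Real.sSup_le ?_ hb)
  · rintro r ⟨x, y, hxy, rfl⟩
    have hd : 0 < dist x y := dist_pos.2 hxy
    rw [show c * f x - c * f y = c * (f x - f y) by ring, abs_mul, abs_of_nonneg hc]
    rw [div_le_iff₀ hd]
    calc c * |f x - f y| ≤ c * (lipNorm f * dist x y) :=
          mul_le_mul_of_nonneg_left (abs_sub_le_lipNorm' f hf x y) hc
    _ = c * lipNorm f * dist x y := by ring
  · rintro r ⟨x, rfl⟩
    simp only [abs_mul, abs_of_nonneg hc]
    exact mul_le_mul_of_nonneg_left (abs_le_lipNorm' f hf x) hc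

lemma memLittleLip_smul' (g : K → ℝ) (hg : MemLittleLip g) {c : ℝ} (hc0 : 0 ≤ c) (hc1 : c ≤ 1) :
    MemLittleLip (fun x => c * g x) := by
  obtain ⟨⟨L, hL⟩, hlil⟩ := hg
  refine ⟨⟨c * L, fun x y => ?_⟩, fun ε hε => ?_⟩
  · rw [show c * g x - c * g y = c * (g x - g y) by ring, abs_mul, abs_of_nonneg hc0]
    calc c * |g x - g y| ≤ c * (L * dist x y) := mul_le_mul_of_nonneg_left (hL x y) hc0
    _ = c * L * dist x y := by ring
  · obtain ⟨δ, hδ, h⟩ := hlil ε hε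
    refine ⟨δ, hδ, fun x y hd hdδ => ?_⟩
    rw [show c * g x - c * g y = c * (g x - g y) by ring, abs_mul, abs_of_nonneg hc0]
    calc c * |g x - g y| ≤ 1 * |g x - g y| :=
          mul_le_mul_of_nonneg_right hc1 (abs_nonneg _)
    _ = |g x - g y| := one_mul _
    _ < ε * dist x y := h x y hd hdδ
/-- If a compact metric space satisfies Assumption H, then every `f ∈ Lip(K,ρ)` is
the pointwise limit of a sequence of functions in `lip(K,ρ)` whose `‖·‖₁` norms are
bounded by `‖f‖₁`. -/
theorem assumptionH_pointwise_approx [CompactSpace K]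
    (hH : ∀ f : K → ℝ, MemLip f → ∀ A : Finset K, ∀ C : ℝ, 1 < C →
      ∃ g : K → ℝ, MemLittleLip g ∧ (∀ a ∈ A, g a = f a) ∧ lipNorm g ≤ C * lipNorm f) :
    ∀ f : K → ℝ, MemLip f →
      ∃ F : ℕ → K → ℝ, (∀ n, MemLittleLip (F n)) ∧
        (∀ x : K, Tendsto (fun n => F n x) atTop (𝓝 (f x))) ∧
        ∀ n, lipNorm (F n) ≤ lipNorm f := by
  intro f hf
  obtain ⟨L, hL⟩ := hf
  have hf' : MemLip f := ⟨L, hL⟩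
  set L' : ℝ := max L 0 with hL'def
  have hL'0 : 0 ≤ L' := le_max_right _ _
  have hL' : ∀ x y : K, |f x - f y| ≤ L' * dist x y := fun x y =>
    le_trans (hL x y) (mul_le_mul_of_nonneg_right (le_max_left _ _) dist_nonneg)
  -- nets
  have hnet : ∀ n : ℕ, ∃ A : Finset K, ∀ x : K, ∃ a ∈ A, dist x a < (1/2 : ℝ)^n := by
    intro n
    obtain ⟨t, -, htfin, hcov⟩ := isCompact_univ.finite_cover_balls
      (e := (1/2 : ℝ)^n) (by positivity) (X := K)
    refine ⟨htfin.toFinset, fun x => ?_⟩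
    obtain ⟨a, ha, hxa⟩ := Set.mem_iUnion₂.1 (hcov (Set.mem_univ x))
    exact ⟨a, htfin.mem_toFinset.2 ha, mem_ball.1 hxa⟩
  choose A hA using hnet
  -- constants
  set C : ℕ → ℝ := fun n => 1 + 1/((n : ℝ)+1) with hCdef
  have hC1 : ∀ n, 1 < C n := by
    intro n; have : 0 < 1/((n:ℝ)+1) := by positivity
    simp only [hCdef]; linarith
  have hC0 : ∀ n, 0 < C n := fun n => lt_trans one_pos (hC1 n)
  -- approximating functions
  have hg : ∀ n : ℕ, ∃ g : K → ℝ, MemLittleLip g ∧ (∀ a ∈ A n, g a = f a) ∧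
      lipNorm g ≤ C n * lipNorm f := fun n => hH f hf' (A n) (C n) (hC1 n)
  choose g hglip hgeq hgnorm using hg
  refine ⟨fun n x => (C n)⁻¹ * g n x, fun n => ?_, ?_, fun n => ?_⟩
  · exact memLittleLip_smul' (g n) (hglip n) (inv_nonneg.2 (hC0 n).le)
      (inv_le_one_of_one_le₀ (hC1 n).le)
  · -- pointwise convergence
    intro x
    have key : ∀ n, |(C n)⁻¹ * g n x - f x| ≤
        lipNorm f * (1/((n:ℝ)+1)) + (lipNorm f + L') * (1/2 : ℝ)^n := by
      intro n
      obtain ⟨a, haA, hxa⟩ := hA n x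
      have hga : g n a = f a := hgeq n a haA
      have hFn : lipNorm (fun y => (C n)⁻¹ * g n y) ≤ lipNorm f := by
        calc lipNorm (fun y => (C n)⁻¹ * g n y) ≤ (C n)⁻¹ * lipNorm (g n) :=
              lipNorm_smul_le' (g n) (hglip n).1 (inv_nonneg.2 (hC0 n).le)
        _ ≤ (C n)⁻¹ * (C n * lipNorm f) :=
              mul_le_mul_of_nonneg_left (hgnorm n) (inv_nonneg.2 (hC0 n).le)
        _ = lipNorm f := by rw [← mul_assoc, inv_mul_cancel₀ (hC0 n).ne', one_mul]
      have hFlip : MemLip (fun y => (C n)⁻¹ * g n y) :=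
        (memLittleLip_smul' (g n) (hglip n) (inv_nonneg.2 (hC0 n).le)
          (inv_le_one_of_one_le₀ (hC1 n).le)).1
      have h1 : |(C n)⁻¹ * g n x - (C n)⁻¹ * g n a| ≤ lipNorm f * (1/2:ℝ)^n := by
        calc |(C n)⁻¹ * g n x - (C n)⁻¹ * g n a|
            ≤ lipNorm (fun y => (C n)⁻¹ * g n y) * dist x a :=
              abs_sub_le_lipNorm' _ hFlip x a
        _ ≤ lipNorm f * (1/2:ℝ)^n :=
              mul_le_mul hFn hxa.le dist_nonneg (lipNorm_nonneg' f)
      have h2 : |(C n)⁻¹ * g n a - f a| ≤ lipNorm f * (1/((n:ℝ)+1)) := by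
        rw [hga]
        have : (C n)⁻¹ * f a - f a = -(f a * ((C n - 1)/C n)) := by
          rw [sub_div, div_self (hC0 n).ne']
          ring
        rw [this, abs_neg, abs_mul]
        have hCub : |(C n - 1)/C n| ≤ 1/((n:ℝ)+1) := by
          rw [abs_of_nonneg (div_nonneg (sub_nonneg.2 (hC1 n).le) (hC0 n).le)]
          rw [div_le_iff₀ (hC0 n)]
          have h1C : 1 ≤ C n := (hC1 n).le
          have : C n - 1 = 1/((n:ℝ)+1) := by simp [hCdef]
          rw [this]
          nlinarith [hC1 n, show (0:ℝ) < 1/((n:ℝ)+1) by positivity]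
        exact mul_le_mul (abs_le_lipNorm' f hf' a) hCub (abs_nonneg _) (lipNorm_nonneg' f)
      have h3 : |f a - f x| ≤ L' * (1/2:ℝ)^n :=
        le_trans (hL' a x) (mul_le_mul_of_nonneg_left
          (by rw [dist_comm]; exact hxa.le) hL'0)
      have tri1 := abs_sub_le ((C n)⁻¹ * g n x) ((C n)⁻¹ * g n a) (f x)
      have tri2 := abs_sub_le ((C n)⁻¹ * g n a) (f a) (f x)
      nlinarith [h1, h2, h3, tri1, tri2]
    have hb : Tendsto (fun n : ℕ => lipNorm f * (1/((n:ℝ)+1))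
        + (lipNorm f + L') * (1/2 : ℝ)^n) atTop (𝓝 0) := by
      have t1 : Tendsto (fun n : ℕ => lipNorm f * (1/((n:ℝ)+1))) atTop (𝓝 0) := by
        simpa using tendsto_one_div_add_atTop_nhds_zero_nat.const_mul (lipNorm f)
      have t2 : Tendsto (fun n : ℕ => (lipNorm f + L') * (1/2 : ℝ)^n) atTop (𝓝 0) := by
        simpa using (tendsto_pow_atTop_nhds_zero_of_lt_one (by norm_num)
          (by norm_num : (1/2:ℝ) < 1)).const_mul (lipNorm f + L')
      simpa using t1.add t2
    have := squeeze_zero_norm (f := fun n => (C n)⁻¹ * g n x - f x)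
      (fun n => by simpa [Real.norm_eq_abs] using key n) hb
    have heq : Tendsto (fun n => (C n)⁻¹ * g n x) atTop (𝓝 (f x)) := by
      have := this.add tendsto_const_nhds (b := f x)
      simpa using this
    exact heq
  · calc lipNorm (fun x => (C n)⁻¹ * g n x) ≤ (C n)⁻¹ * lipNorm (g n) :=
          lipNorm_smul_le' (g n) (hglip n).1 (inv_nonneg.2 (hC0 n).le)
    _ ≤ (C n)⁻¹ * (C n * lipNorm f) :=
          mul_le_mul_of_nonneg_left (hgnorm n) (inv_nonneg.2 (hC0 n).le)
    _ = lipNorm f := by rw [← mul_assoc, inv_mul_cancel₀ (hC0 n).ne', one_mul]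
end

section
/- Let (K, ρ) be a compact metric space, α ∈ (0,1), f ∈ Lip_α(K,ρ), A a finite subset of K, and C > 1. Then there exists g ∈ Lip(K,ρ) (hence g ∈ lip_α(K,ρ)) such that g = f on A and ‖g‖_α ≤ C‖f‖_α. -/
/-!
Extend `f|A` by the McShane-type formula `g₀ x = min_{a ∈ A} (f a + ω (dist x a))` with the
modulus `ω t = min (L t) (N t ^ α)`, where `N = ‖f‖_α` and `L` is a Lipschitz constant of `f`
on the finite set `A`. Being concave with `ω 0 = 0`, `ω` is subadditive, so `g₀` has modulus of
continuity `ω`: it is `L`-Lipschitz with Hölder seminorm at most `N`; and `g₀ = f` on `A`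
because `f` itself has modulus `ω` there. Truncating `g₀` to `[-N, N]` also bounds the sup norm,
so even `‖g‖_α ≤ ‖f‖_α`.
-/

open Metric

variable {K : Type*} [MetricSpace K]

/-- The Hölder norm `‖f‖_α = max{[f]_α, ‖f‖_∞}` on `Lip_α(K,ρ)`. -/
noncomputable def holderNorm (α : ℝ) (f : K → ℝ) : ℝ :=
  max (sSup {r : ℝ | ∃ x y : K, x ≠ y ∧ r = |f x - f y| / dist x y ^ α})
    (sSup (Set.range fun x : K => |f x|))

open Set

theorem ConcaveOn.map_add_le_add {f : ℝ → ℝ} (hf : ConcaveOn ℝ (Ici 0) f) (hf0 : 0 ≤ f 0)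
    {u v : ℝ} (hu : 0 ≤ u) (hv : 0 ≤ v) : f (u + v) ≤ f u + f v := by
  rcases (add_nonneg hu hv).eq_or_lt with hs | hs
  · obtain ⟨rfl, rfl⟩ : u = 0 ∧ v = 0 := ⟨by linarith, by linarith⟩
    simpa using hf0
  -- `u` and `v` are convex combinations of `u + v` and `0`
  have key : ∀ {w}, 0 ≤ w → w ≤ u + v → w / (u + v) * f (u + v) ≤ f w := fun {w} hw hwle => by
    have h := hf.2 (mem_Ici.2 hs.le) (mem_Ici.2 le_rfl) (div_nonneg hw hs.le)
      (sub_nonneg.2 ((div_le_one hs).2 hwle)) (add_sub_cancel _ 1)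
    simp only [smul_eq_mul, mul_zero, add_zero, div_mul_cancel₀ _ hs.ne'] at h
    nlinarith [sub_nonneg.2 ((div_le_one hs).2 hwle)]
  have hsum : u / (u + v) * f (u + v) + v / (u + v) * f (u + v) = f (u + v) := by
    field_simp
  linarith [key hu (by linarith), key hv (by linarith)]

section Modulus

variable {L N α : ℝ}

theorem concaveOn_min_mul_mul_rpow (hL : 0 ≤ L) (hN : 0 ≤ N) (hα₀ : 0 ≤ α) (hα₁ : α ≤ 1) :
    ConcaveOn ℝ (Ici 0) fun t => min (L * t) (N * t ^ α) :=
  ((concaveOn_id (convex_Ici 0)).smul hL).inf ((Real.concaveOn_rpow hα₀ hα₁).smul hN)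

theorem monotoneOn_min_mul_mul_rpow (hL : 0 ≤ L) (hN : 0 ≤ N) (hα₀ : 0 ≤ α) :
    MonotoneOn (fun t => min (L * t) (N * t ^ α)) (Ici 0) := fun s hs _ _ hst =>
  min_le_min (by gcongr) (by gcongr)

theorem min_mul_mul_rpow_zero (hN : 0 ≤ N) : min (L * 0) (N * (0 : ℝ) ^ α) = 0 := by
  rw [mul_zero]
  exact min_eq_left (by positivity)

end Modulus

section McShane

variable {X : Type*} [PseudoMetricSpace X] (A : Finset X) (hA : A.Nonempty) (ω : ℝ → ℝ)
  (f : X → ℝ)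

noncomputable def mcShaneExtension (x : X) : ℝ :=
  A.inf' hA fun a => f a + ω (dist x a)

variable {A hA ω f}

theorem mcShaneExtension_sub_le (hmono : MonotoneOn ω (Ici 0))
    (hsub : ∀ u v, 0 ≤ u → 0 ≤ v → ω (u + v) ≤ ω u + ω v) (x y : X) :
    mcShaneExtension A hA ω f x - mcShaneExtension A hA ω f y ≤ ω (dist x y) := by
  obtain ⟨b, hb, hyb⟩ := A.exists_mem_eq_inf' hA fun a => f a + ω (dist y a)
  have hxb : mcShaneExtension A hA ω f x ≤ f b + ω (dist x b) := A.inf'_le _ hb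
  have hω : ω (dist x b) ≤ ω (dist y b) + ω (dist x y) :=
    calc ω (dist x b) ≤ ω (dist y b + dist x y) :=
          hmono dist_nonneg (add_nonneg dist_nonneg dist_nonneg)
            (by linarith [dist_triangle_left x b y, dist_comm x y])
      _ ≤ ω (dist y b) + ω (dist x y) := hsub _ _ dist_nonneg dist_nonneg
  have hy : mcShaneExtension A hA ω f y = f b + ω (dist y b) := hyb
  linarith

theorem abs_mcShaneExtension_sub_le (hmono : MonotoneOn ω (Ici 0))
    (hsub : ∀ u v, 0 ≤ u → 0 ≤ v → ω (u + v) ≤ ω u + ω v) (x y : X) :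
    |mcShaneExtension A hA ω f x - mcShaneExtension A hA ω f y| ≤ ω (dist x y) :=
  abs_sub_le_iff.2 ⟨mcShaneExtension_sub_le hmono hsub x y,
    dist_comm x y ▸ mcShaneExtension_sub_le hmono hsub y x⟩

theorem mcShaneExtension_of_mem (hω : ω 0 = 0)
    (hf : ∀ a ∈ A, ∀ b ∈ A, f a - f b ≤ ω (dist a b)) {a : X} (ha : a ∈ A) :
    mcShaneExtension A hA ω f a = f a := by
  refine le_antisymm ?_ (A.le_inf' hA _ fun b hb => by linarith [hf a ha b hb])
  exact (A.inf'_le (fun b => f b + ω (dist a b)) ha).trans_eq (by simp [hω])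

end McShane

theorem Finset.exists_lipschitz_const {X : Type*} [MetricSpace X] (A : Finset X) (f : X → ℝ) :
    ∃ L, 0 ≤ L ∧ ∀ a ∈ A, ∀ b ∈ A, |f a - f b| ≤ L * dist a b := by
  refine ⟨∑ p ∈ A ×ˢ A, |f p.1 - f p.2| / dist p.1 p.2, by positivity, fun a ha b hb => ?_⟩
  rcases eq_or_ne a b with rfl | hab
  · simp
  have hd : 0 < dist a b := dist_pos.2 hab
  have hterm : |f a - f b| / dist a b ≤ ∑ p ∈ A ×ˢ A, |f p.1 - f p.2| / dist p.1 p.2 :=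
    Finset.single_le_sum (f := fun p : X × X => |f p.1 - f p.2| / dist p.1 p.2)
      (fun _ _ => by positivity) (Finset.mk_mem_product ha hb)
  rwa [div_le_iff₀ hd] at hterm

section HolderNorm

variable {α : ℝ} {f : K → ℝ}

theorem holderNorm_nonneg (α : ℝ) (f : K → ℝ) : 0 ≤ holderNorm α f :=
  le_max_of_le_right (Real.sSup_nonneg (by rintro _ ⟨x, rfl⟩; exact abs_nonneg _))

theorem abs_sub_le_holderNorm_mul_rpow {M : ℝ} (hf : ∀ x y, |f x - f y| ≤ M * dist x y ^ α)
    (x y : K) : |f x - f y| ≤ holderNorm α f * dist x y ^ α := by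
  rcases eq_or_ne x y with rfl | hxy
  · simpa using mul_nonneg (holderNorm_nonneg α f) (Real.rpow_nonneg le_rfl α)
  have hbdd : BddAbove {r | ∃ x y : K, x ≠ y ∧ r = |f x - f y| / dist x y ^ α} := by
    refine ⟨M, ?_⟩
    rintro _ ⟨x', y', hxy', rfl⟩
    exact (div_le_iff₀ (Real.rpow_pos_of_pos (dist_pos.2 hxy') α)).2 (hf x' y')
  exact (div_le_iff₀ (Real.rpow_pos_of_pos (dist_pos.2 hxy) α)).1
    ((le_csSup hbdd ⟨x, y, hxy, rfl⟩).trans (le_max_left _ _))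

theorem abs_le_holderNorm (hf : BddAbove (range fun x => |f x|)) (x : K) :
    |f x| ≤ holderNorm α f :=
  (le_csSup hf ⟨x, rfl⟩).trans (le_max_right _ _)

theorem holderNorm_le {N : ℝ} (hN : 0 ≤ N) (hf : ∀ x y, |f x - f y| ≤ N * dist x y ^ α)
    (hfN : ∀ x, |f x| ≤ N) : holderNorm α f ≤ N := by
  refine max_le (Real.sSup_le ?_ hN) (Real.sSup_le ?_ hN)
  · rintro _ ⟨x, y, hxy, rfl⟩
    exact (div_le_iff₀ (Real.rpow_pos_of_pos (dist_pos.2 hxy) α)).2 (hf x y)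
  · rintro _ ⟨x, rfl⟩
    exact hfN x

end HolderNorm

theorem bddAbove_range_abs_of_abs_sub_le_mul_rpow {X : Type*} [PseudoMetricSpace X]
    [BoundedSpace X] {f : X → ℝ} {M α : ℝ} (hα : 0 ≤ α)
    (hf : ∀ x y, |f x - f y| ≤ M * dist x y ^ α) : BddAbove (range fun x => |f x|) := by
  rcases isEmpty_or_nonempty X with hX | ⟨⟨x₀⟩⟩
  · simp [range_eq_empty]
  refine ⟨|f x₀| + |M| * diam (univ : Set X) ^ α, ?_⟩
  rintro _ ⟨x, rfl⟩
  have hd : dist x x₀ ^ α ≤ diam (univ : Set X) ^ α := by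
    gcongr
    exact dist_le_diam_of_mem BoundedSpace.bounded_univ trivial trivial
  have hM : M * dist x x₀ ^ α ≤ |M| * diam (univ : Set X) ^ α :=
    (mul_le_mul_of_nonneg_right (le_abs_self M) (by positivity)).trans (by gcongr)
  linarith [abs_sub_abs_le_abs_sub (f x) (f x₀), hf x x₀]

theorem exists_lipschitz_interpolant_of_holder {X : Type*} [MetricSpace X] {α N : ℝ}
    (hα₀ : 0 ≤ α) (hα₁ : α ≤ 1) (hN : 0 ≤ N) {f : X → ℝ}
    (hf : ∀ x y, |f x - f y| ≤ N * dist x y ^ α) (A : Finset X) (hfA : ∀ a ∈ A, |f a| ≤ N) :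
    ∃ g : X → ℝ, (∃ L, ∀ x y, |g x - g y| ≤ L * dist x y) ∧ (∀ a ∈ A, g a = f a) ∧
      (∀ x y, |g x - g y| ≤ N * dist x y ^ α) ∧ ∀ x, |g x| ≤ N := by
  rcases A.eq_empty_or_nonempty with rfl | hA
  · exact ⟨0, ⟨0, by simp⟩, by simp, fun x y => by simpa using by positivity,
      fun _ => by simpa using hN⟩
  obtain ⟨L, hL, hfL⟩ := A.exists_lipschitz_const f
  set ω : ℝ → ℝ := fun t => min (L * t) (N * t ^ α)
  have hsub : ∀ u v, 0 ≤ u → 0 ≤ v → ω (u + v) ≤ ω u + ω v := fun _ _ hu hv =>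
    (concaveOn_min_mul_mul_rpow hL hN hα₀ hα₁).map_add_le_add (min_mul_mul_rpow_zero hN).ge hu hv
  have hext : ∀ x y, |mcShaneExtension A hA ω f x - mcShaneExtension A hA ω f y| ≤ ω (dist x y) :=
    abs_mcShaneExtension_sub_le (monotoneOn_min_mul_mul_rpow hL hN hα₀) hsub
  have hextA : ∀ a ∈ A, mcShaneExtension A hA ω f a = f a := fun a ha =>
    mcShaneExtension_of_mem (ω := ω) (min_mul_mul_rpow_zero hN)
      (fun a ha b hb => (le_abs_self _).trans (le_min (hfL a ha b hb) (hf a b))) ha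
  -- truncation to `[-N, N]` fixes the values on `A` (as `|f a| ≤ N`) and is 1-Lipschitz
  let g : X → ℝ := fun x => projIcc (-N) N (by linarith) (mcShaneExtension A hA ω f x)
  have hg : ∀ x y, |g x - g y| ≤ ω (dist x y) := fun x y =>
    (abs_projIcc_sub_projIcc _).trans (hext x y)
  refine ⟨g, ⟨L, fun x y => (hg x y).trans (min_le_left _ _)⟩, fun a ha => ?_,
    fun x y => (hg x y).trans (min_le_right _ _), fun x => abs_le.2 (projIcc _ _ _ _).2⟩
  simp only [g, hextA a ha, projIcc_of_mem _ (abs_le.1 (hfA a ha))]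

/-- Let `(K,ρ)` be a compact metric space, `α ∈ (0,1)`, `f ∈ Lip_α(K,ρ)`, `A ⊆ K`
finite and `C > 1`. Then there is a Lipschitz function `g ∈ Lip(K,ρ)` (hence
`g ∈ lip_α(K,ρ)`) with `g = f` on `A` and `‖g‖_α ≤ C ‖f‖_α`. -/
theorem holder_finite_interpolation [CompactSpace K] (α : ℝ) (h0 : 0 < α) (h1 : α < 1)
    (f : K → ℝ) (M : ℝ) (hf : ∀ x y : K, |f x - f y| ≤ M * dist x y ^ α)
    (A : Finset K) (C : ℝ) (hC : 1 < C) :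
    ∃ g : K → ℝ, (∃ L : ℝ, ∀ x y : K, |g x - g y| ≤ L * dist x y) ∧
      (∀ a ∈ A, g a = f a) ∧ holderNorm α g ≤ C * holderNorm α f := by
  have hN := holderNorm_nonneg α f
  obtain ⟨g, hg_lip, hgA, hg_holder, hg_bound⟩ :=
    exists_lipschitz_interpolant_of_holder h0.le h1.le hN (abs_sub_le_holderNorm_mul_rpow hf) A
      fun a _ => abs_le_holderNorm (bddAbove_range_abs_of_abs_sub_le_mul_rpow h0.le hf) a
  refine ⟨g, hg_lip, hgA, ?_⟩
  calc holderNorm α g ≤ holderNorm α f := holderNorm_le hN hg_holder hg_bound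
    _ ≤ C * holderNorm α f := le_mul_of_one_le_left hN hC.le
end
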